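/- arXiv:2204.02775 — 2 statements merged into one kernel-verified Lean document; each statement's English description precedes it below -/
import Mathlib

section
/- Let r ≥ 1 be an integer and let θ_j ∈ (0,1) satisfy θ_j = 1/(r + θ_{j+1}) for some θ_{j+1} ∈ (0,1) (i.e., θ_j = [r; θ_{j+1}] is a continued-fraction tail). Then (r+1)·θ_j^2·(s+θ)·θ_{j+1}^2 ≤ (1+θ)/2 for any integer s ≥ 1 with θ_{j+1} = 1/(s + θ_{j+2}), θ_{j+2} ∈ (0,1), where θ=(√5−1)/2. In particular the product of two consecutive factors (r_j+1)θ_j^2 (r_{j+1}+θ)θ_{j+1}^2 is bounded by α^2 := (1+θ)/2 < 1. -/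
set_option maxHeartbeats 1000000


/-- Product of two consecutive factors `(r+1)θ_j² (s+θ)θ_{j+1}²` is bounded by
`α² = (1+θ)/2 < 1`, where `θ = (√5−1)/2` and `θ_j = 1/(r+θ_{j+1})`,
`θ_{j+1} = 1/(s+θ_{j+2})` are continued-fraction tails. -/
theorem stmt_2 (r s : ℕ) (hr : 1 ≤ r) (hs : 1 ≤ s)
    (t0 t1 t2 : ℝ)
    (h0 : t0 ∈ Set.Ioo (0 : ℝ) 1) (h1 : t1 ∈ Set.Ioo (0 : ℝ) 1)
    (h2 : t2 ∈ Set.Ioo (0 : ℝ) 1)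
    (e0 : t0 = 1 / ((r : ℝ) + t1)) (e1 : t1 = 1 / ((s : ℝ) + t2)) :
    ((r : ℝ) + 1) * t0 ^ 2 * ((s : ℝ) + (Real.sqrt 5 - 1) / 2) * t1 ^ 2 ≤
      (1 + (Real.sqrt 5 - 1) / 2) / 2 := by
  obtain ⟨ht0, ht0'⟩ := h0
  obtain ⟨ht1, ht1'⟩ := h1
  obtain ⟨ht2, ht2'⟩ := h2
  set θ : ℝ := (Real.sqrt 5 - 1) / 2 with hθdef
  have hsqrt : (1:ℝ) ≤ Real.sqrt 5 := by
    nlinarith [Real.sq_sqrt (by norm_num : (5:ℝ) ≥ 0), Real.sqrt_nonneg 5]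
  have hθ0 : 0 ≤ θ := by rw [hθdef]; linarith
  have hR : (1:ℝ) ≤ (r:ℝ) := by exact_mod_cast hr
  have hS : (1:ℝ) ≤ (s:ℝ) := by exact_mod_cast hs
  have hden0 : (0:ℝ) < (r:ℝ) + t1 := by linarith
  have hden1 : (0:ℝ) < (s:ℝ) + t2 := by linarith
  have k0 : t0 * ((r:ℝ) + t1) = 1 := by rw [e0]; field_simp
  have k1 : t1 * ((s:ℝ) + t2) = 1 := by rw [e1]; field_simp
  clear e0 e1
  -- key: t0*t1*(rs+1) ≤ 1
  have key : t0 * t1 * ((r:ℝ)*s + 1) ≤ 1 := by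
    nlinarith [mul_pos ht0 ht1, mul_pos (mul_pos ht0 ht1) ht2,
      mul_nonneg (mul_nonneg ht0.le ht1.le) (mul_nonneg (by linarith : (0:ℝ) ≤ (r:ℝ)) ht2.le),
      mul_le_of_le_one_right ht0.le ht1'.le]
  have hP : 0 ≤ t0 * t1 := by positivity
  have hQ : (0:ℝ) < ((r:ℝ)*s + 1) := by nlinarith
  have key2 : (t0 * t1)^2 * ((r:ℝ)*s + 1)^2 ≤ 1 := by nlinarith [mul_nonneg hP hQ.le]
  -- final polynomial inequality
  have hrs : (r:ℝ) ≤ (r:ℝ)*s := by nlinarith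
  have haux : (0:ℝ) ≤ ((r:ℝ)*s + 1)^2 - 2*((r:ℝ)+1) := by nlinarith [sq_nonneg ((r:ℝ)*s - r)]
  have hr21 : (0:ℝ) ≤ (r:ℝ)^2 - 1 := by nlinarith [sq_nonneg ((r:ℝ)-1)]
  have hexp : (1 + θ) * ((r:ℝ)*s + 1)^2 - 2 * ((r:ℝ) + 1) * ((s:ℝ) + θ)
      = ((r:ℝ)^2 - 1) * (s:ℝ)^2 + ((s:ℝ) - 1)^2
        + θ * (((r:ℝ)*s + 1)^2 - 2*((r:ℝ)+1)) := by ring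
  have hfin : 2 * ((r:ℝ) + 1) * ((s:ℝ) + θ) ≤ (1 + θ) * ((r:ℝ)*s + 1)^2 := by
    nlinarith [mul_nonneg hθ0 haux, sq_nonneg ((s:ℝ) - 1),
      mul_nonneg hr21 (sq_nonneg (s:ℝ)), hexp]
  have hQ2 : (0:ℝ) < ((r:ℝ)*s + 1)^2 := by positivity
  have hRS : (0:ℝ) ≤ ((r:ℝ) + 1) * ((s:ℝ) + θ) := by nlinarith
  rw [← mul_le_mul_iff_of_pos_right hQ2]
  calc ((r:ℝ) + 1) * t0 ^ 2 * ((s:ℝ) + θ) * t1 ^ 2 * ((r:ℝ)*s + 1)^2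
      = (((r:ℝ) + 1) * ((s:ℝ) + θ)) * ((t0*t1)^2 * ((r:ℝ)*s + 1)^2) := by ring
    _ ≤ (((r:ℝ) + 1) * ((s:ℝ) + θ)) * 1 := by
        exact mul_le_mul_of_nonneg_left key2 hRS
    _ ≤ (1 + θ) / 2 * ((r:ℝ)*s + 1)^2 := by linarith
end

section
/- Let ρ ∈ (0,1) be an irrational number whose continued fraction expansion [r_0, r_1, r_2, ...] is periodic with period n. Let λ_{kn} = (θ_0 θ_1 ⋯ θ_{n−1})^k where θ_i = [r_i, r_{i+1}, ...] are the continued fraction tails, and let q_m, p_m denote the convergent denominators and numerators of ρ. Then there exists a constant A = A(ρ, m, n) and α = √((1+θ)/2) with θ = (√5−1)/2, such that for all k: q_{(k+m)n} · λ_{kn}^2 < A · α^{kn}. -/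
/-!
Write `θ_i = t i` and `P = θ_0 ⋯ θ_{n-1}`. Two sequences of tails in `(0,1)` of the same partial
quotients differ by a factor `θ_i θ_{i+1} < 1/2` every two steps, so the tails are unique and hence
`n`-periodic; therefore `θ_0 ⋯ θ_{kn-1} = P^k` and `P² = θ_0 ⋯ θ_{2n-1} ≤ 2^{-n} ≤ α^{2n}`.
The convergent denominators satisfy `(θ_0 ⋯ θ_{j-1}) (q_j + q_{j-1} θ_j) = 1`, so
`q_{(k+m)n} ≤ P^{-(k+m)}` and `q_{(k+m)n} P^{2k} ≤ P^{-m} P^k ≤ P^{-m} α^{kn}`.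
-/

open Finset Function

theorem Function.Periodic.prod_range_mul {M : Type*} [CommMonoid M] {f : ℕ → M} {n : ℕ}
    (h : Periodic f n) (k : ℕ) : ∏ i ∈ range (k * n), f i = (∏ i ∈ range n, f i) ^ k := by
  induction k with
  | zero => simp
  | succ k ih =>
    rw [Nat.succ_mul, prod_range_add, ih, pow_succ]
    exact congrArg _ (prod_congr rfl fun i _ => by rw [add_comm]; exact h.nat_mul k i)

lemma prod_range_two_mul_le_pow {t : ℕ → ℝ} {c : ℝ} (ht : ∀ i, 0 ≤ t i)
    (hc : ∀ i, t i * t (i + 1) ≤ c) (j : ℕ) : ∏ i ∈ range (2 * j), t i ≤ c ^ j := by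
  induction j with
  | zero => simp
  | succ j ih =>
    rw [Nat.mul_succ, prod_range_succ, prod_range_succ, mul_assoc, pow_succ]
    exact mul_le_mul ih (hc _) (mul_nonneg (ht _) (ht _))
      ((prod_nonneg fun i _ => ht i).trans ih)

section Tails

variable {a t s q : ℕ → ℝ}

lemma tail_mul_add_eq_one (ht : ∀ i, 0 < t i) (htrec : ∀ i, t i = 1 / (a i + t (i + 1)))
    (i : ℕ) : t i * (a i + t (i + 1)) = 1 := by
  have hne : a i + t (i + 1) ≠ 0 := fun h => (ht i).ne' (by rw [htrec i, h, div_zero])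
  rw [htrec i, one_div, inv_mul_cancel₀ hne]

lemma tail_mul_tail_succ_lt_half (ha : ∀ i, 1 ≤ a i) (ht : ∀ i, t i ∈ Set.Ioo (0 : ℝ) 1)
    (htrec : ∀ i, t i = 1 / (a i + t (i + 1))) (i : ℕ) : t i * t (i + 1) < 1 / 2 := by
  have h := tail_mul_add_eq_one (fun i => (ht i).1) htrec i
  have : t i * t (i + 1) < t i * a i :=
    mul_lt_mul_of_pos_left ((ht (i + 1)).2.trans_le (ha i)) (ht i).1
  linarith [mul_add (t i) (a i) (t (i + 1))]

lemma abs_sub_tails_le (ht : ∀ i, t i ∈ Set.Ioo (0 : ℝ) 1)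
    (htrec : ∀ i, t i = 1 / (a i + t (i + 1))) (hs : ∀ i, s i ∈ Set.Ioo (0 : ℝ) 1)
    (hsrec : ∀ i, s i = 1 / (a i + s (i + 1))) (i : ℕ) :
    |t i - s i| ≤ t i * |t (i + 1) - s (i + 1)| := by
  have hdiff : t i - s i = s i * (t i * (s (i + 1) - t (i + 1))) := by
    linear_combination s i * tail_mul_add_eq_one (fun i => (ht i).1) htrec i -
      t i * tail_mul_add_eq_one (fun i => (hs i).1) hsrec i
  rw [hdiff, abs_mul, abs_mul, abs_of_pos (hs i).1, abs_of_pos (ht i).1, abs_sub_comm]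
  exact mul_le_of_le_one_left (mul_nonneg (ht i).1.le (abs_nonneg _)) (hs i).2.le

theorem tails_unique (ha : ∀ i, 1 ≤ a i) (ht : ∀ i, t i ∈ Set.Ioo (0 : ℝ) 1)
    (htrec : ∀ i, t i = 1 / (a i + t (i + 1))) (hs : ∀ i, s i ∈ Set.Ioo (0 : ℝ) 1)
    (hsrec : ∀ i, s i = 1 / (a i + s (i + 1))) : t = s := by
  have hstep : ∀ i, |t i - s i| ≤ |t (i + 2) - s (i + 2)| / 2 := fun i =>
    calc |t i - s i|
        ≤ t i * (t (i + 1) * |t (i + 2) - s (i + 2)|) :=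
          (abs_sub_tails_le ht htrec hs hsrec i).trans <| mul_le_mul_of_nonneg_left
            (abs_sub_tails_le ht htrec hs hsrec (i + 1)) (ht i).1.le
      _ = t i * t (i + 1) * |t (i + 2) - s (i + 2)| := by ring
      _ ≤ 1 / 2 * |t (i + 2) - s (i + 2)| := mul_le_mul_of_nonneg_right
          (tail_mul_tail_succ_lt_half ha ht htrec i).le (abs_nonneg _)
      _ = |t (i + 2) - s (i + 2)| / 2 := by ring
  have hpow : ∀ j i, |t i - s i| ≤ (1 / 2) ^ j := by
    intro j
    induction j with
    | zero =>
      intro i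
      rw [pow_zero, abs_sub_le_iff]
      constructor <;> linarith [(ht i).1, (ht i).2, (hs i).1, (hs i).2]
    | succ j ih =>
      intro i
      calc |t i - s i| ≤ |t (i + 2) - s (i + 2)| / 2 := hstep i
        _ ≤ (1 / 2) ^ j / 2 := by gcongr; exact ih (i + 2)
        _ = (1 / 2) ^ (j + 1) := by ring
  funext i
  have h0 : |t i - s i| ≤ 0 :=
    ge_of_tendsto' (tendsto_pow_atTop_nhds_zero_of_lt_one (by norm_num) (by norm_num))
      fun j => hpow j i
  exact sub_eq_zero.1 (abs_nonpos_iff.1 h0)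

theorem tails_periodic {n : ℕ} (ha : ∀ i, 1 ≤ a i) (hper : Periodic a n)
    (ht : ∀ i, t i ∈ Set.Ioo (0 : ℝ) 1) (htrec : ∀ i, t i = 1 / (a i + t (i + 1))) :
    Periodic t n := by
  have h : t = fun i => t (i + n) := tails_unique ha ht htrec (fun i => ht (i + n))
    fun i => by rw [htrec (i + n), hper i, Nat.add_right_comm]
  exact fun i => (congrFun h i).symm

lemma sq_prod_tails_le_half_pow {n : ℕ} (ha : ∀ i, 1 ≤ a i) (ht : ∀ i, t i ∈ Set.Ioo (0 : ℝ) 1)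
    (htrec : ∀ i, t i = 1 / (a i + t (i + 1))) (htper : Periodic t n) :
    (∏ i ∈ range n, t i) ^ 2 ≤ (1 / 2) ^ n := by
  rw [← htper.prod_range_mul 2]
  exact prod_range_two_mul_le_pow (fun i => (ht i).1.le)
    (fun i => (tail_mul_tail_succ_lt_half ha ht htrec i).le) n

lemma prod_tails_mul_denom_add_eq_one (ht : ∀ i, 0 < t i)
    (htrec : ∀ i, t i = 1 / (a i + t (i + 1))) (hq0 : q 0 = 0) (hq1 : q 1 = 1)
    (hqrec : ∀ j, q (j + 2) = a j * q (j + 1) + q j) (j : ℕ) :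
    (∏ i ∈ range j, t i) * (q (j + 1) + q j * t j) = 1 := by
  induction j with
  | zero => simp [hq0, hq1]
  | succ j ih =>
    rw [prod_range_succ, hqrec j]
    linear_combination ih + (∏ i ∈ range j, t i) * q (j + 1) * tail_mul_add_eq_one ht htrec j

lemma denom_mul_prod_tails_le_one (ht : ∀ i, 0 < t i)
    (htrec : ∀ i, t i = 1 / (a i + t (i + 1))) (hq0 : q 0 = 0) (hq1 : q 1 = 1)
    (hqrec : ∀ j, q (j + 2) = a j * q (j + 1) + q j) (hq : ∀ j, 0 ≤ q j) (j : ℕ) :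
    q (j + 1) * ∏ i ∈ range j, t i ≤ 1 := by
  have h := prod_tails_mul_denom_add_eq_one ht htrec hq0 hq1 hqrec j
  have : 0 ≤ (∏ i ∈ range j, t i) * (q j * t j) :=
    mul_nonneg (prod_nonneg fun i _ => (ht i).le) (mul_nonneg (hq j) (ht j).le)
  linarith [mul_add (∏ i ∈ range j, t i) (q (j + 1)) (q j * t j)]

end Tails

theorem stmt_3_general (n m : ℕ)
    (r : ℕ → ℕ) (hr : ∀ i, 1 ≤ r i) (hper : ∀ i, r (i + n) = r i)
    (t : ℕ → ℝ) (ht : ∀ i, t i ∈ Set.Ioo (0 : ℝ) 1)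
    (htrec : ∀ i, t i = 1 / ((r i : ℝ) + t (i + 1)))
    (Q : ℕ → ℕ) (hQ0 : Q 0 = 0) (hQ1 : Q 1 = 1)
    (hQrec : ∀ j, Q (j + 2) = r j * Q (j + 1) + Q j) :
    ∃ A > 0, ∀ k : ℕ,
      (Q ((k + m) * n + 1) : ℝ) * ((∏ i ∈ Finset.range n, t i) ^ k) ^ 2 <
        A * (Real.sqrt ((1 + (Real.sqrt 5 - 1) / 2) / 2)) ^ (k * n) := by
  have hr' : ∀ i, (1 : ℝ) ≤ r i := fun i => by exact_mod_cast hr i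
  have htper : Periodic t n := tails_periodic hr' (fun i => by simp [hper]) ht htrec
  set P := ∏ i ∈ range n, t i
  set α := Real.sqrt ((1 + (Real.sqrt 5 - 1) / 2) / 2)
  have hP : 0 < P := prod_pos fun i _ => (ht i).1
  have hθ : 0 ≤ (Real.sqrt 5 - 1) / 2 := by
    linarith [Real.one_le_sqrt.2 (by norm_num : (1 : ℝ) ≤ 5)]
  have hα : 0 < α := Real.sqrt_pos.2 (by linarith)
  have hPα : P ≤ α ^ n := by
    refine le_of_pow_le_pow_left₀ two_ne_zero (by positivity) ?_
    calc P ^ 2 ≤ (1 / 2) ^ n := sq_prod_tails_le_half_pow hr' ht htrec htper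
      _ ≤ (α ^ 2) ^ n := by gcongr; rw [Real.sq_sqrt (by linarith)]; linarith
      _ = (α ^ n) ^ 2 := by ring
  have hQP : ∀ k, (Q ((k + m) * n + 1) : ℝ) * P ^ (k + m) ≤ 1 := fun k => by
    rw [← htper.prod_range_mul]
    exact denom_mul_prod_tails_le_one (fun i => (ht i).1) htrec (by simp [hQ0]) (by simp [hQ1])
      (fun j => by simp [hQrec]) (fun j => Nat.cast_nonneg _) _
  refine ⟨2 / P ^ m, by positivity, fun k => ?_⟩
  calc (Q ((k + m) * n + 1) : ℝ) * (P ^ k) ^ 2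
      = (Q ((k + m) * n + 1) : ℝ) * P ^ (k + m) * P ^ k / P ^ m := by field_simp; ring
    _ ≤ P ^ k / P ^ m := by gcongr; exact (mul_le_of_le_one_left (by positivity) (hQP k))
    _ ≤ α ^ (k * n) / P ^ m := by gcongr; rw [mul_comm, pow_mul]; gcongr
    _ < 2 / P ^ m * α ^ (k * n) := by
      rw [div_mul_eq_mul_div, two_mul, add_div]
      exact lt_add_of_pos_left _ (by positivity)

/-- For a periodic continued fraction of period `n`, with scaling ratios
`λ_{kn} = (θ_0⋯θ_{n-1})^k`, one has `q_{(k+m)n} λ_{kn}² < A α^{kn}` with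
`α = √((1+θ)/2)`, `θ = (√5−1)/2`. `Q (j+1)` plays the role of `q_j`. -/
theorem stmt_3 (n m : ℕ) (hn : 1 ≤ n)
    (r : ℕ → ℕ) (hr : ∀ i, 1 ≤ r i) (hper : ∀ i, r (i + n) = r i)
    (t : ℕ → ℝ) (ht : ∀ i, t i ∈ Set.Ioo (0 : ℝ) 1)
    (htrec : ∀ i, t i = 1 / ((r i : ℝ) + t (i + 1)))
    (Q : ℕ → ℕ) (hQ0 : Q 0 = 0) (hQ1 : Q 1 = 1)
    (hQrec : ∀ j, Q (j + 2) = r j * Q (j + 1) + Q j) :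
    ∃ A > 0, ∀ k : ℕ,
      (Q ((k + m) * n + 1) : ℝ) * ((∏ i ∈ Finset.range n, t i) ^ k) ^ 2 <
        A * (Real.sqrt ((1 + (Real.sqrt 5 - 1) / 2) / 2)) ^ (k * n) :=
  stmt_3_general n m r hr hper t ht htrec Q hQ0 hQ1 hQrec
end
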